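/- Let H be a reduced, commutative, cancellative, atomic monoid, let a ∈ H, and let k, l ∈ L(a) be adjacent lengths with k < l. If d(Z_k(a), Z_l(a)) = l, then (x,y) ∈ A_a(∼_{H,mon}) for all x ∈ Z_k(a) and y ∈ Z_l(a). -/

import Mathlib

namespace CMR

variable {α : Type*} [CancelCommMonoid α]

/-- The factorization monoid `Z(H)`: the free abelian monoid over the set of atoms of `H`,
modeled as multisets of atoms. -/
abbrev Fac (α : Type*) [CancelCommMonoid α] : Type _ := Multiset {u : α // Irreducible u}

/-- The factorization homomorphism `π : Z(H) → H`. -/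
def piF (z : Fac α) : α := (z.map Subtype.val).prod

/-- `Z a`: the set of factorizations of `a`. -/
def Z (a : α) : Set (Fac α) := {z | piF z = a}

/-- `L a`: the set of lengths of `a`. -/
def L (a : α) : Set ℕ := {n | ∃ z ∈ Z a, Multiset.card z = n}

/-- `Zk a k`: the factorizations of `a` of length `k`. -/
def Zk (a : α) (k : ℕ) : Set (Fac α) := {z ∈ Z a | Multiset.card z = k}

/-- `ZM a M`: the factorizations of `a` whose length lies in `M`. -/
def ZM (a : α) (M : Set ℕ) : Set (Fac α) := {z ∈ Z a | Multiset.card z ∈ M}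

/-- The distance between two factorizations:
`d(z,z') = max (|z / gcd(z,z')|, |z' / gcd(z,z')|)`. -/
noncomputable def d (z z' : Fac α) : ℕ :=
  letI := Classical.decEq {u : α // Irreducible u}
  max (Multiset.card (z - z')) (Multiset.card (z' - z))

/-- The distance between two sets of factorizations, the minimum of pairwise
distances (with the convention `sInf ∅ = 0`). -/
noncomputable def dS (X Y : Set (Fac α)) : ℕ :=
  sInf {n : ℕ | ∃ x ∈ X, ∃ y ∈ Y, d x y = n}

/-- `k` and `l` are adjacent lengths of `a` (with `k < l`):
`L(a) ∩ [k, l] = {k, l}`. -/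
def Adjacent (a : α) (k l : ℕ) : Prop :=
  k ∈ L a ∧ l ∈ L a ∧ k < l ∧ ∀ m ∈ L a, k ≤ m → m ≤ l → m = k ∨ m = l

/-- A chain of factorizations of `a` from `z` to `z'` whose consecutive members
satisfy the step predicate `P`. -/
def Chain (a : α) (P : Fac α → Fac α → Prop) (z z' : Fac α) : Prop :=
  ∃ (n : ℕ) (c : Fin (n + 1) → Fac α),
    c 0 = z ∧ c (Fin.last n) = z' ∧ (∀ i, c i ∈ Z a) ∧
    ∀ i : Fin n, P (c i.castSucc) (c i.succ)

/-- The catenary degree of an element: the smallest `N ∈ ℕ∞` such that any two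
factorizations of `a` are connected by an `N`-chain. -/
noncomputable def cat (a : α) : ℕ∞ :=
  sInf {N : ℕ∞ | ∀ z ∈ Z a, ∀ z' ∈ Z a,
    Chain a (fun x y => (d x y : ℕ∞) ≤ N) z z'}

/-- The equal catenary degree of an element: the smallest `N ∈ ℕ∞` such that any two
factorizations of `a` of the same length are connected by an equal-length `N`-chain. -/
noncomputable def ceq (a : α) : ℕ∞ :=
  sInf {N : ℕ∞ | ∀ z ∈ Z a, ∀ z' ∈ Z a, Multiset.card z = Multiset.card z' →
    Chain a (fun x y => (d x y : ℕ∞) ≤ N ∧ Multiset.card x = Multiset.card y) z z'}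

/-- The monotone catenary degree of an element: the smallest `N ∈ ℕ∞` such that any two
factorizations of `a` (ordered by length) are connected by a monotone `N`-chain. -/
noncomputable def cmon (a : α) : ℕ∞ :=
  sInf {N : ℕ∞ | ∀ z ∈ Z a, ∀ z' ∈ Z a, Multiset.card z ≤ Multiset.card z' →
    Chain a (fun x y => (d x y : ℕ∞) ≤ N ∧ Multiset.card x ≤ Multiset.card y) z z'}

/-- The adjacent catenary degree of an element:
`c_adj(a) = sup{d(Z_k(a), Z_l(a)) : k, l ∈ L(a) adjacent}`. -/
noncomputable def cadj (a : α) : ℕ∞ :=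
  sSup {r : ℕ∞ | ∃ k l : ℕ, Adjacent a k l ∧ r = (dS (Zk a k) (Zk a l) : ℕ∞)}

noncomputable def catH (α : Type*) [CancelCommMonoid α] : ℕ∞ := ⨆ a : α, cat a
noncomputable def ceqH (α : Type*) [CancelCommMonoid α] : ℕ∞ := ⨆ a : α, ceq a
noncomputable def cmonH (α : Type*) [CancelCommMonoid α] : ℕ∞ := ⨆ a : α, cmon a
noncomputable def cadjH (α : Type*) [CancelCommMonoid α] : ℕ∞ := ⨆ a : α, cadj a

/-- `gcd(x, y) ≠ 1`: the two factorizations share an atom. -/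
def RStep (x y : Fac α) : Prop := ∃ u, u ∈ x ∧ u ∈ y

/-- `z ≈ z'`: there is an `R`-chain concatenating `z` and `z'` in `Z a`. -/
def RRel (a : α) (z z' : Fac α) : Prop := Chain a RStep z z'

/-- `z ≈_eq z'`: there is an equal-length `R`-chain concatenating `z` and `z'` in `Z a`. -/
def RRelEq (a : α) (z z' : Fac α) : Prop :=
  Chain a (fun x y => RStep x y ∧ Multiset.card x = Multiset.card y) z z'

/-- There is a monotone `R`-chain from `z` to `z'` in `Z a`. -/
def MonRChain (a : α) (z z' : Fac α) : Prop :=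
  Chain a (fun x y => RStep x y ∧ Multiset.card x ≤ Multiset.card y) z z'

/-- `μ(a)`: the supremum, over the `R`-classes `ρ` of `Z a`, of the minimal length of
an element of `ρ`. -/
noncomputable def mu (a : α) : ℕ∞ :=
  sSup {r : ℕ∞ | ∃ z ∈ Z a,
    r = ((sInf {n : ℕ | ∃ z', RRel a z z' ∧ Multiset.card z' = n} : ℕ) : ℕ∞)}

noncomputable def muH (α : Type*) [CancelCommMonoid α] : ℕ∞ := ⨆ a : α, mu a

/-- `μ_eq(a) = sup{k ∈ L(a) : Z_k(a) has more than one ≈_eq-class}`. -/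
noncomputable def mueq (a : α) : ℕ∞ :=
  sSup {r : ℕ∞ | ∃ k ∈ L a,
    (∃ z ∈ Zk a k, ∃ z' ∈ Zk a k, ¬ RRelEq a z z') ∧ r = (k : ℕ∞)}

noncomputable def mueqH (α : Type*) [CancelCommMonoid α] : ℕ∞ := ⨆ a : α, mueq a

/-- `μ_adj(a) = sup{k ∈ L(a) : d(Z_k(a), Z_l(a)) = k for the l ∈ L(a), l < k adjacent to k}`. -/
noncomputable def muadj (a : α) : ℕ∞ :=
  sSup {r : ℕ∞ | ∃ k ∈ L a,
    (∃ l : ℕ, Adjacent a l k ∧ dS (Zk a k) (Zk a l) = k) ∧ r = (k : ℕ∞)}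

noncomputable def muadjH (α : Type*) [CancelCommMonoid α] : ℕ∞ := ⨆ a : α, muadj a

/-- The monoid of relations of `H`, as a subset of `Z(H) × Z(H)`. -/
def relMon (α : Type*) [CancelCommMonoid α] : Set (Fac α × Fac α) :=
  {p | piF p.1 = piF p.2}

/-- The monoid of equal-length relations of `H`. -/
def relMonEq (α : Type*) [CancelCommMonoid α] : Set (Fac α × Fac α) :=
  {p | piF p.1 = piF p.2 ∧ Multiset.card p.1 = Multiset.card p.2}

/-- The monoid of monotone relations of `H`. -/
def relMonMon (α : Type*) [CancelCommMonoid α] : Set (Fac α × Fac α) :=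
  {p | piF p.1 = piF p.2 ∧ Multiset.card p.1 ≤ Multiset.card p.2}

/-- `p` is an atom (irreducible element) of the reduced submonoid `S` of `Z(H) × Z(H)`. -/
def IsAtomIn (S : Set (Fac α × Fac α)) (p : Fac α × Fac α) : Prop :=
  p ∈ S ∧ p ≠ 0 ∧ ∀ q ∈ S, ∀ r ∈ S, p = q + r → q = 0 ∨ r = 0

/-- `A_a(S) = A(S) ∩ (Z(a) × Z(a))`. -/
def AtomsAt (S : Set (Fac α × Fac α)) (a : α) : Set (Fac α × Fac α) :=
  {p | IsAtomIn S p ∧ p.1 ∈ Z a ∧ p.2 ∈ Z a}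

/-- The tame degree `t(a, x)`. -/
noncomputable def tdeg (a : α) (x : Fac α) : ℕ∞ :=
  sInf {N : ℕ∞ | ∀ z ∈ Z a, (∃ w ∈ Z a, x ≤ w) →
    ∃ z' ∈ Z a, x ≤ z' ∧ (d z z' : ℕ∞) ≤ N}

/-- The tame degree `t(H) = sup{t(a, u) : a ∈ H, u ∈ A(H)}`. -/
noncomputable def tH (α : Type*) [CancelCommMonoid α] : ℕ∞ :=
  ⨆ (a : α) (u : {u : α // Irreducible u}), tdeg a {u}

/-- The `m`-adjacent catenary degree of an element:
`c_{ad,m}(a) = sup{d(Z_k(a), Z_{[k-m,k)}(a)) : k ∈ L(a)}`. -/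
noncomputable def cadm (m : ℕ) (a : α) : ℕ∞ :=
  sSup {r : ℕ∞ | ∃ k ∈ L a, r = (dS (Zk a k) (ZM a (Set.Ico (k - m) k)) : ℕ∞)}

noncomputable def cadmH (α : Type*) [CancelCommMonoid α] (m : ℕ) : ℕ∞ := ⨆ a : α, cadm m a

/-- `μ_{ad,m}(a) = sup{k ∈ L(a) : d(Z_k(a), Z_{[k-m,k)}(a)) = k}`. -/
noncomputable def muadm (m : ℕ) (a : α) : ℕ∞ :=
  sSup {r : ℕ∞ | ∃ k ∈ L a, dS (Zk a k) (ZM a (Set.Ico (k - m) k)) = k ∧ r = (k : ℕ∞)}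

noncomputable def muadmH (α : Type*) [CancelCommMonoid α] (m : ℕ) : ℕ∞ := ⨆ a : α, muadm m a

/-- `H` is reduced: the only unit is `1`. -/
def Reduced (α : Type*) [CancelCommMonoid α] : Prop := ∀ a : α, IsUnit a → a = 1

/-- `H` is atomic: every element is a product of atoms. -/
def Atomic (α : Type*) [CancelCommMonoid α] : Prop := ∀ a : α, ∃ z : Fac α, piF z = a

/-- The ascending chain condition on principal ideals. -/
def ACCP (α : Type*) [CancelCommMonoid α] : Prop :=
  ∀ f : ℕ → α, (∀ n, f (n + 1) ∣ f n) → ∃ N, ∀ n, N ≤ n → f N ∣ f n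

/-! If `(x, y) = q + r` in `∼_{H,mon}`, then the crossed factorization `q.1 + r.2` of `a` has
length between `|x| = k` and `|y| = l`, hence length `k` or `l` by adjacency. In the first case
`r.2` is a common part of `q.1 + r.2` and `y`, in the second `q.1` is a common part of `x` and
`q.1 + r.2`; a nonempty common part would bring the distance between a factorization of length
`k` and one of length `l` below `l`. -/

theorem piF_add (s t : Fac α) : piF (s + t) = piF s * piF t := by
  simp [piF]

theorem dS_le_d {X Y : Set (Fac α)} {x y : Fac α} (hx : x ∈ X) (hy : y ∈ Y) :
    dS X Y ≤ d x y :=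
  Nat.sInf_le ⟨x, hx, y, hy, rfl⟩

theorem d_le_max_card_sub {z z' w : Fac α} (hz : w ≤ z) (hz' : w ≤ z') :
    d z z' ≤ max (Multiset.card z - Multiset.card w) (Multiset.card z' - Multiset.card w) := by
  have key : ∀ [DecidableEq {u : α // Irreducible u}] {s t : Fac α}, w ≤ s → w ≤ t →
      Multiset.card (s - t) ≤ Multiset.card s - Multiset.card w := fun hs ht => by
    rw [← Multiset.card_sub hs]
    exact Multiset.card_le_card (tsub_le_tsub_left ht _)
  let _ := Classical.decEq {u : α // Irreducible u}
  exact max_le_max (key hz hz') (key hz' hz)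

theorem eq_zero_of_le_of_card_le_d {z z' w : Fac α} (hz : w ≤ z) (hz' : w ≤ z')
    (hlt : Multiset.card z < Multiset.card z') (hd : Multiset.card z' ≤ d z z') : w = 0 := by
  have hle := d_le_max_card_sub hz hz'
  have hw : Multiset.card w ≤ Multiset.card z := Multiset.card_le_card hz
  rw [← Multiset.card_eq_zero]
  omega

theorem add_snd_mem_Zk_or {a : α} {k l : ℕ} {x y : Fac α} {q r : Fac α × Fac α}
    (hadj : Adjacent a k l) (hx : x ∈ Zk a k) (hy : y ∈ Zk a l)
    (hq : q ∈ relMonMon α) (hr : r ∈ relMonMon α) (hxy : (x, y) = q + r) :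
    q.1 + r.2 ∈ Zk a k ∨ q.1 + r.2 ∈ Zk a l := by
  obtain ⟨-, -, -, hbetween⟩ := hadj
  obtain ⟨hqπ, hq⟩ := hq
  obtain ⟨-, hr⟩ := hr
  have hx1 : x = q.1 + r.1 := congrArg Prod.fst hxy
  have hy2 : y = q.2 + r.2 := congrArg Prod.snd hxy
  have hz : q.1 + r.2 ∈ Z a := by
    change piF _ = a
    rw [piF_add, hqπ, ← piF_add, ← hy2, hy.1]
  have hxk := hx.2
  have hyl := hy.2
  rw [hx1, Multiset.card_add] at hxk
  rw [hy2, Multiset.card_add] at hyl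
  have hzk : k ≤ Multiset.card (q.1 + r.2) := by rw [Multiset.card_add]; omega
  have hzl : Multiset.card (q.1 + r.2) ≤ l := by rw [Multiset.card_add]; omega
  rcases hbetween _ ⟨_, hz, rfl⟩ hzk hzl with h | h
  · exact Or.inl ⟨hz, h⟩
  · exact Or.inr ⟨hz, h⟩

theorem isAtomIn_relMonMon_of_adjacent {a : α} {k l : ℕ} {x y : Fac α}
    (hadj : Adjacent a k l) (hfar : ∀ w ∈ Zk a k, ∀ w' ∈ Zk a l, l ≤ d w w')
    (hx : x ∈ Zk a k) (hy : y ∈ Zk a l) : IsAtomIn (relMonMon α) (x, y) := by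
  have hkl := hadj.2.2.1
  refine ⟨⟨hx.1.trans hy.1.symm, hx.2 ▸ hy.2 ▸ hkl.le⟩, ?_, ?_⟩
  · intro h0
    have hy0 : y = 0 := congrArg Prod.snd h0
    have := hy.2
    simp only [hy0, Multiset.card_zero] at this
    omega
  rintro q hq r hr hxy
  have hx1 : x = q.1 + r.1 := congrArg Prod.fst hxy
  have hy2 : y = q.2 + r.2 := congrArg Prod.snd hxy
  rcases add_snd_mem_Zk_or hadj hx hy hq hr hxy with hz | hz
  · right
    have hr2 : r.2 = 0 := eq_zero_of_le_of_card_le_d le_add_self (hy2 ▸ le_add_self)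
      (hz.2.trans_lt (hy.2 ▸ hkl)) (hy.2 ▸ hfar _ hz _ hy)
    have hr1 : Multiset.card r.1 = 0 := by simpa [hr2] using hr.2
    exact Prod.ext (Multiset.card_eq_zero.mp hr1) hr2
  · left
    have hq1 : q.1 = 0 := eq_zero_of_le_of_card_le_d (hx1 ▸ le_self_add) le_self_add
      (hx.2.trans_lt (hz.2 ▸ hkl)) (hz.2 ▸ hfar _ hx _ hz)
    have hq2 : Multiset.card q.2 = 0 := by
      have hcard := hz.2.trans hy.2.symm
      rw [hy2, Multiset.card_add, Multiset.card_add, hq1, Multiset.card_zero] at hcard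
      omega
    exact Prod.ext hq1 (Multiset.card_eq_zero.mp hq2)

theorem stmt3_general {α : Type*} [CancelCommMonoid α]
    (a : α) (k l : ℕ)
    (hadj : Adjacent a k l) (hd : dS (Zk a k) (Zk a l) = l) :
    ∀ x ∈ Zk a k, ∀ y ∈ Zk a l, (x, y) ∈ AtomsAt (relMonMon α) a := by
  intro x hx y hy
  have hfar : ∀ w ∈ Zk a k, ∀ w' ∈ Zk a l, l ≤ d w w' := fun w hw w' hw' =>
    hd ▸ dS_le_d hw hw'
  exact ⟨isAtomIn_relMonMon_of_adjacent hadj hfar hx hy, hx.1, hy.1⟩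

/-- Let `H` be a reduced, commutative, cancellative, atomic monoid, `a ∈ H`, and let
`k, l ∈ L(a)` be adjacent lengths with `k < l`. If `d(Z_k(a), Z_l(a)) = l`, then
`(x, y) ∈ A_a(∼_{H,mon})` for all `x ∈ Z_k(a)` and `y ∈ Z_l(a)`. -/
theorem stmt3 {α : Type*} [CancelCommMonoid α]
    (hred : Reduced α) (hatomic : Atomic α) (a : α) (k l : ℕ)
    (hadj : Adjacent a k l) (hd : dS (Zk a k) (Zk a l) = l) :
    ∀ x ∈ Zk a k, ∀ y ∈ Zk a l, (x, y) ∈ AtomsAt (relMonMon α) a :=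
  stmt3_general a k l hadj hd

end CMR
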